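/- arXiv:1011.6066 — 5 statements merged into one kernel-verified Lean document; each statement's English description precedes it below -/
import Mathlib

section
/- Let X be a complex Banach space, D ⊆ X a linear subspace, and T : D → X a closed linear operator (its graph is closed in X × X). Then for every x ∈ D(T^∞), one has sup{|z| : z ∈ σ_T(x)} ≤ limsup_{n→∞} ‖T^n x‖^{1/n}, where the inequality holds in the extended nonnegative reals [0,∞]. -/
/-! If `limsup ‖Tⁿx‖^{1/n} < b < |z₀|`, then `‖Tⁿx‖ ≤ C aⁿ` for some `a < b`, so the Neumann
series `φ(z) = -∑ z^{-(n+1)} Tⁿx` converges uniformly on `{b < |z|}` and is holomorphic there.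
Its partial sums lie in the domain of `T` and their images are again convergent partial sums,
so closedness of `T` gives `T φ(z) = z φ(z) + x`, i.e. `z₀ ∈ ρ_T(x)`. -/

open Filter
open scoped ENNReal Topology

noncomputable section

variable {X : Type*} [NormedAddCommGroup X] [NormedSpace ℂ X]

/-- `z₀` belongs to the local resolvent set of the (possibly unbounded, partially defined)
operator `T` at `x` if there is an open neighbourhood `U` of `z₀` and an analytic function
`φ : U → X` with values in the domain of `T` such that `(T - z) φ z = x` on `U`. -/
def LocalResolventSet (T : X →ₗ.[ℂ] X) (x : X) : Set ℂ :=
  {z₀ | ∃ U : Set ℂ, IsOpen U ∧ z₀ ∈ U ∧ ∃ φ : ℂ → X,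
    AnalyticOnNhd ℂ φ U ∧ ∀ z ∈ U, ∃ hz : φ z ∈ T.domain, T ⟨φ z, hz⟩ - z • φ z = x}

/-- The local spectrum of `T` at `x` is the complement of the local resolvent set. -/
def LocalSpectrum (T : X →ₗ.[ℂ] X) (x : X) : Set ℂ :=
  (LocalResolventSet T x)ᶜ

/-- `y` is the orbit of `x` under `T` : `y n = T^n x`; its existence witnesses
`x ∈ D(T^∞)`. -/
def IsIterSeq (T : X →ₗ.[ℂ] X) (x : X) (y : ℕ → X) : Prop :=
  y 0 = x ∧ ∀ n : ℕ, ∃ hn : y n ∈ T.domain, T ⟨y n, hn⟩ = y (n + 1)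

open Asymptotics
open scoped NNReal

theorem LinearPMap.hasSum_mem_graph {R E F ι : Type*} [Ring R] [AddCommGroup E] [Module R E]
    [AddCommGroup F] [Module R F] [TopologicalSpace E] [TopologicalSpace F]
    (f : E →ₗ.[R] F) (hf : _root_.IsClosed (f.graph : Set (E × F))) {u : ι → E} {v : ι → F}
    {a : E} {b : F} (hu : HasSum u a) (hv : HasSum v b) (h : ∀ i, (u i, v i) ∈ f.graph) :
    (a, b) ∈ f.graph :=
  hf.mem_of_tendsto (hu.prodMk hv) (Eventually.of_forall fun _ => f.graph.sum_mem fun i _ => h i)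

theorem eventually_norm_le_pow_of_limsup_lt {E : Type*} [SeminormedAddCommGroup E]
    {y : ℕ → E} {a : ℝ≥0}
    (h : limsup (fun n : ℕ => (‖y n‖₊ : ℝ≥0∞) ^ (1 / (n : ℝ))) atTop < a) :
    ∀ᶠ n in atTop, ‖y n‖ ≤ (a : ℝ) ^ n := by
  filter_upwards [eventually_lt_of_limsup_lt h, eventually_gt_atTop 0] with n hn hn0
  rw [one_div, ENNReal.rpow_inv_lt_iff (by positivity), ENNReal.rpow_natCast] at hn
  exact_mod_cast hn.le

theorem exists_norm_le_mul_pow_of_limsup_lt {E : Type*} [SeminormedAddCommGroup E]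
    {y : ℕ → E} {a : ℝ≥0}
    (h : limsup (fun n : ℕ => (‖y n‖₊ : ℝ≥0∞) ^ (1 / (n : ℝ))) atTop < a) :
    ∃ C, ∀ n, ‖y n‖ ≤ C * (a : ℝ) ^ n := by
  have ha : (0 : ℝ) < a := by exact_mod_cast (zero_le).trans_lt h
  have hO : y =O[atTop] fun n => (a : ℝ) ^ n :=
    IsBigO.of_bound' <| (eventually_norm_le_pow_of_limsup_lt h).mono fun n hn => by
      simpa [abs_of_pos ha] using hn
  obtain ⟨C, -, hC⟩ := bound_of_isBigO_nat_atTop hO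
  exact ⟨C, fun n => by simpa [abs_of_pos ha] using hC (pow_ne_zero n ha.ne')⟩

theorem norm_inv_pow_succ_smul_le {E : Type*} [SeminormedAddCommGroup E] [NormedSpace ℂ E]
    {y : ℕ → E} {C a b : ℝ} (hC : ∀ n, ‖y n‖ ≤ C * a ^ n) (hb : 0 < b)
    {z : ℂ} (hz : b ≤ ‖z‖) (n : ℕ) :
    ‖(z⁻¹) ^ (n + 1) • y n‖ ≤ C * b⁻¹ * (a / b) ^ n := by
  have hz' : ‖z⁻¹‖ ≤ b⁻¹ := by rw [norm_inv]; exact inv_anti₀ hb hz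
  calc ‖(z⁻¹) ^ (n + 1) • y n‖ = ‖z⁻¹‖ ^ (n + 1) * ‖y n‖ := by rw [norm_smul, norm_pow]
    _ ≤ b⁻¹ ^ (n + 1) * (C * a ^ n) :=
      mul_le_mul (pow_le_pow_left₀ (norm_nonneg _) hz' _) (hC n) (norm_nonneg _) (by positivity)
    _ = C * b⁻¹ * (a / b) ^ n := by ring

/-- The Neumann series of `(z - T)⁻¹ x` when `y n = Tⁿx`. -/
def resolventSeries (y : ℕ → X) (z : ℂ) : X :=
  ∑' n, (z⁻¹) ^ (n + 1) • y n

namespace IsIterSeq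

variable {T : X →ₗ.[ℂ] X} {x : X} {y : ℕ → X}

theorem mem_graph (hy : IsIterSeq T x y) (n : ℕ) : (y n, y (n + 1)) ∈ T.graph := by
  obtain ⟨hn, hTn⟩ := hy.2 n
  exact (T.mem_graph_iff).mpr ⟨⟨y n, hn⟩, rfl, hTn⟩

theorem mem_graph_resolventSeries (hclosed : IsClosed (T.graph : Set (X × X)))
    (hy : IsIterSeq T x y) {z : ℂ} (hz : z ≠ 0)
    (hs : Summable fun n => (z⁻¹) ^ (n + 1) • y n) :
    (resolventSeries y z, z • resolventSeries y z - x) ∈ T.graph := by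
  have hpow : HasSum (fun n => (z⁻¹) ^ n • y n) (z • resolventSeries y z) := by
    convert hs.hasSum.const_smul z using 1
    · ext n
      rw [smul_smul, pow_succ', ← mul_assoc, mul_inv_cancel₀ hz, one_mul]
    · rfl
  have hshift : HasSum (fun n => (z⁻¹) ^ (n + 1) • y (n + 1)) (z • resolventSeries y z - x) := by
    simpa [hy.1] using (hasSum_nat_add_iff' 1).mpr hpow
  exact T.hasSum_mem_graph hclosed hs.hasSum hshift fun n =>
    T.graph.smul_mem ((z⁻¹) ^ (n + 1)) (hy.mem_graph n)

theorem mem_localResolventSet [CompleteSpace X] (hclosed : IsClosed (T.graph : Set (X × X)))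
    (hy : IsIterSeq T x y) {C a b : ℝ} (hC : ∀ n, ‖y n‖ ≤ C * a ^ n) (ha : 0 ≤ a)
    (hab : a < b) {z₀ : ℂ} (hz₀ : b < ‖z₀‖) : z₀ ∈ LocalResolventSet T x := by
  set U : Set ℂ := {z | b < ‖z‖}
  have hb : 0 < b := ha.trans_lt hab
  have hU : IsOpen U := isOpen_lt continuous_const continuous_norm
  have hne : ∀ z ∈ U, z ≠ 0 := fun z hz => norm_pos_iff.mp (hb.trans hz)
  have hbound : ∀ n, ∀ z ∈ U, ‖(z⁻¹) ^ (n + 1) • y n‖ ≤ C * b⁻¹ * (a / b) ^ n :=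
    fun n z hz => norm_inv_pow_succ_smul_le hC hb hz.le n
  have hgeom : Summable fun n : ℕ => C * b⁻¹ * (a / b) ^ n :=
    (summable_geometric_of_lt_one (by positivity) ((div_lt_one hb).mpr hab)).mul_left _
  have hdiff : DifferentiableOn ℂ (resolventSeries y) U :=
    Complex.differentiableOn_tsum_of_summable_norm hgeom
      (fun n z hz =>
        (((differentiableAt_inv (hne z hz)).pow _).smul_const _).differentiableWithinAt)
      hU hbound
  refine ⟨U, hU, hz₀, fun z => -resolventSeries y z, hdiff.neg.analyticOnNhd hU, fun z hz => ?_⟩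
  have hgraph := T.graph.neg_mem <| hy.mem_graph_resolventSeries hclosed (hne z hz)
    (hgeom.of_norm_bounded fun n => hbound n z hz)
  rw [Prod.neg_mk] at hgraph
  have hdom := T.mem_domain_of_mem_graph hgraph
  refine ⟨hdom, ?_⟩
  rw [← (T.image_iff hdom).mpr hgraph]
  module

end IsIterSeq

/-- If `T` is a closed operator on a complex Banach space `X` and `x ∈ D(T^∞)`, then
`sup {|z| : z ∈ σ_T(x)} ≤ limsup ‖T^n x‖^{1/n}` in `[0,∞]`. -/
theorem stmt0 [CompleteSpace X] (T : X →ₗ.[ℂ] X)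
    (hclosed : IsClosed (T.graph : Set (X × X)))
    (x : X) (y : ℕ → X) (hy : IsIterSeq T x y) :
    (⨆ z ∈ LocalSpectrum T x, (‖z‖₊ : ℝ≥0∞)) ≤
      Filter.limsup (fun n : ℕ => (‖y n‖₊ : ℝ≥0∞) ^ (1 / (n : ℝ))) atTop := by
  refine iSup₂_le fun z₀ hz₀ => le_of_not_gt fun hlt => hz₀ ?_
  obtain ⟨a, hLa, haz⟩ := ENNReal.lt_iff_exists_nnreal_btwn.mp hlt
  obtain ⟨b, hab, hbz⟩ := exists_between (ENNReal.coe_lt_coe.mp haz)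
  obtain ⟨C, hC⟩ := exists_norm_le_mul_pow_of_limsup_lt hLa
  exact hy.mem_localResolventSet hclosed hC a.2 (mod_cast hab) (mod_cast hbz)
end
end

section
/- Suppose the basic assumption and (A1) hold. Then the operator T_e has the single-valued extension property. -/
open Filter
open scoped ENNReal Topology

noncomputable section

variable {X : Type*} [NormedAddCommGroup X] [NormedSpace ℂ X]

/-- A partially defined operator `T` on `X` has the single-valued extension property if for
every nonempty open `U ⊆ ℂ`, the only analytic `φ : U → X` with values in the domain of `T`
such that `(T - z) φ z = 0` on `U` is the zero function. -/
def HasSVEP (T : X →ₗ.[ℂ] X) : Prop :=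
  ∀ U : Set ℂ, IsOpen U → U.Nonempty → ∀ φ : ℂ → X, AnalyticOnNhd ℂ φ U →
    (∀ z ∈ U, ∃ hz : φ z ∈ T.domain, T ⟨φ z, hz⟩ - z • φ z = 0) →
    ∀ z ∈ U, φ z = 0

/-- Suppose `X` is a complex Banach space, `T ⊆ T_e` are partially defined linear operators on
`X`, `Λ` is a nonempty set, `L λ` are normed spaces, `F : X → Π λ, L λ` is linear and injective
on the domain of `T_e`, `a : Λ → ℂ`, and `F (T_e x) λ = a λ • F x λ` on the domain of `T_e`
(the basic assumption). If moreover each coordinate map `x ↦ F x λ` is continuous on the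
domain of `T_e` in the topology induced by `X` (assumption (A1)), then `T_e` has the
single-valued extension property. -/
theorem stmt1 [CompleteSpace X] {Λ : Type*} [Nonempty Λ] {L : Λ → Type*}
    [∀ l, NormedAddCommGroup (L l)] [∀ l, NormedSpace ℂ (L l)]
    (T Te : X →ₗ.[ℂ] X) (hTTe : T ≤ Te)
    (F : X →ₗ[ℂ] ∀ l, L l) (hinj : Set.InjOn F (Te.domain : Set X))
    (a : Λ → ℂ)
    (hdiag : ∀ (x : Te.domain) (l : Λ), F (Te x) l = a l • F (x : X) l)
    (hA1 : ∀ l : Λ, Continuous fun x : Te.domain => F (x : X) l) :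
    HasSVEP Te := by
  intro U hU hne φ hφ hφ0 z0 hz0
  obtain ⟨hmem, -⟩ := hφ0 z0 hz0
  have key : ∀ z ∈ U, ∀ l, (z - a l) • F (φ z) l = 0 := by
    intro z hz l
    obtain ⟨hzd, heqz⟩ := hφ0 z hz
    rw [sub_eq_zero] at heqz
    have h2 := hdiag ⟨φ z, hzd⟩ l
    rw [heqz, map_smul] at h2
    have : z • F (φ z) l = a l • F (φ z) l := h2
    rw [sub_smul, this, sub_self]
  -- auxiliary map into the domain
  classical
  set ψ : ℂ → Te.domain := fun z =>
    if h : φ z ∈ Te.domain then (⟨φ z, h⟩ : Te.domain) else 0 with hψ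
  have hψU : ∀ z ∈ U, (ψ z : X) = φ z := by
    intro z hz
    obtain ⟨hzd, -⟩ := hφ0 z hz
    simp [hψ, hzd]
  have hzero : ∀ l, F (φ z0) l = 0 := by
    intro l
    by_cases hal : z0 = a l
    · -- continuity argument
      have hφc : ContinuousWithinAt φ U z0 := ((hφ z0 hz0).continuousAt).continuousWithinAt
      have hψc : Tendsto ψ (𝓝[U] z0) (𝓝 (ψ z0)) := by
        rw [tendsto_subtype_rng]
        have : (ψ z0 : X) = φ z0 := hψU z0 hz0
        rw [this]
        refine hφc.congr' ?_
        filter_upwards [self_mem_nhdsWithin] with z hz using (hψU z hz).symm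
      have hg : Tendsto (fun z => F (φ z) l) (𝓝[U] z0) (𝓝 (F (φ z0) l)) := by
        have h1 : Tendsto (fun x : Te.domain => F (x : X) l) (𝓝 (ψ z0)) (𝓝 (F (φ z0) l)) := by
          simpa [hψU z0 hz0] using (hA1 l).tendsto (ψ z0)
        have h2 := h1.comp hψc
        refine h2.congr' ?_
        filter_upwards [self_mem_nhdsWithin] with z hz
        simp [hψU z hz]
      have hsub : 𝓝[U \ {z0}] z0 = 𝓝[≠] z0 := by
        rw [Set.diff_eq, Set.inter_comm, ← nhdsWithin_restrict' _ (hU.mem_nhds hz0)]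
      have hne' : (𝓝[U \ {z0}] z0).NeBot := by rw [hsub]; infer_instance
      have hg' : Tendsto (fun z => F (φ z) l) (𝓝[U \ {z0}] z0) (𝓝 (F (φ z0) l)) :=
        hg.mono_left (nhdsWithin_mono _ Set.diff_subset)
      have hg0 : Tendsto (fun z => F (φ z) l) (𝓝[U \ {z0}] z0) (𝓝 0) := by
        refine tendsto_const_nhds.congr' ?_
        filter_upwards [self_mem_nhdsWithin] with z hz
        have hk := key z hz.1 l
        have hza : z - a l ≠ 0 := by
          rw [sub_ne_zero, ← hal]
          exact fun h => hz.2 h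
        exact ((smul_eq_zero.mp hk).resolve_left hza).symm
      exact tendsto_nhds_unique hg' hg0
    · have hk := key z0 hz0 l
      have hza : z0 - a l ≠ 0 := sub_ne_zero.mpr hal
      exact (smul_eq_zero.mp hk).resolve_left hza
  have hF0 : F (φ z0) = F (0 : X) := by
    funext l
    simp [hzero l]
  exact hinj hmem (Submodule.zero_mem _) hF0
end
end

section
/- Suppose the basic assumption and (A1) hold. Then for every x ∈ D(T_e^∞), one has sup{|a(λ)| : λ ∈ supp F x} ≤ liminf_{n→∞} ‖T_e^n x‖^{1/n}, in the extended nonnegative reals [0,∞]. -/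
open Filter
open scoped ENNReal Topology

noncomputable section

variable {X : Type*} [NormedAddCommGroup X] [NormedSpace ℂ X]

private lemma aux_tendsto_rpow_one_div {q : ℝ≥0∞} (hq0 : q ≠ 0) (hqtop : q ≠ ⊤) :
    Filter.Tendsto (fun n : ℕ => q ^ (1 / (n : ℝ))) Filter.atTop (𝓝 1) := by
  lift q to NNReal using hqtop
  have h0 : q ≠ 0 := by exact_mod_cast hq0
  have h1 : Filter.Tendsto (fun n : ℕ => q ^ (1 / (n : ℝ))) Filter.atTop (𝓝 1) := by
    have := Filter.Tendsto.nnrpow (tendsto_const_nhds : Filter.Tendsto _ Filter.atTop (𝓝 q))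
      (tendsto_one_div_atTop_nhds_zero_nat) (Or.inl h0)
    simpa using this
  have := (ENNReal.tendsto_coe (f := Filter.atTop)).mpr h1
  refine this.congr fun n => ?_
  rw [ENNReal.coe_rpow_of_ne_zero h0]

/-- Suppose the basic assumption (`F` linear, injective on the domain of `T_e`, diagonalising
`T_e` with eigenvalue function `a`) and (A1) (each coordinate map `x ↦ F x λ` is continuous on
the domain of `T_e` in the topology induced by `X`) hold. Then for every `x ∈ D(T_e^∞)`
(with orbit `y n = T_e^n x`),
`sup {|a λ| : λ ∈ supp F x} ≤ liminf ‖T_e^n x‖^{1/n}` in `[0,∞]`. -/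
theorem stmt2 [CompleteSpace X] {Λ : Type*} [Nonempty Λ] {L : Λ → Type*}
    [∀ l, NormedAddCommGroup (L l)] [∀ l, NormedSpace ℂ (L l)]
    (T Te : X →ₗ.[ℂ] X) (hTTe : T ≤ Te)
    (F : X →ₗ[ℂ] ∀ l, L l) (hinj : Set.InjOn F (Te.domain : Set X))
    (a : Λ → ℂ)
    (hdiag : ∀ (x : Te.domain) (l : Λ), F (Te x) l = a l • F (x : X) l)
    (hA1 : ∀ l : Λ, Continuous fun x : Te.domain => F (x : X) l)
    (x : X) (y : ℕ → X) (hy : IsIterSeq Te x y) :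
    (⨆ l : Λ, ⨆ _ : F x l ≠ 0, (‖a l‖₊ : ℝ≥0∞)) ≤
      Filter.liminf (fun n : ℕ => (‖y n‖₊ : ℝ≥0∞) ^ (1 / (n : ℝ))) atTop := by
  obtain ⟨hy0, hmem⟩ := hy
  -- membership of each y n
  have hdom : ∀ n, y n ∈ Te.domain := fun n => (hmem n).1
  -- iterate formula
  have hiter : ∀ (l : Λ) (n : ℕ), F (y n) l = (a l) ^ n • F x l := by
    intro l n
    induction n with
    | zero => simp [hy0]
    | succ n ih =>
      obtain ⟨hn, heq⟩ := hmem n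
      rw [← heq, hdiag ⟨y n, hn⟩ l]
      simp only [ih, pow_succ, smul_smul]
      ring_nf
  refine iSup₂_le fun l hl => ?_
  -- bounded coordinate map
  set g : Te.domain →L[ℂ] L l :=
    { toLinearMap := (LinearMap.proj l).comp (F.comp Te.domain.subtype), cont := hA1 l }
  have hg : ∀ n, ‖a l‖₊ ^ n * ‖F x l‖₊ ≤ ‖g‖₊ * ‖y n‖₊ := by
    intro n
    have := g.le_opNNNorm ⟨y n, hdom n⟩
    have hgyn : g ⟨y n, hdom n⟩ = F (y n) l := rfl
    calc ‖a l‖₊ ^ n * ‖F x l‖₊ = ‖F (y n) l‖₊ := by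
          rw [hiter l n, nnnorm_smul, nnnorm_pow]
      _ ≤ ‖g‖₊ * ‖y n‖₊ := by rw [← hgyn]; exact this
  set K : ℝ≥0∞ := (‖g‖₊ : ℝ≥0∞) + 1 with hK
  have hK0 : K ≠ 0 := by simp [hK]
  have hKtop : K ≠ ⊤ := by simp [hK]
  set c : ℝ≥0∞ := (‖F x l‖₊ : ℝ≥0∞) with hc
  have hc0 : c ≠ 0 := by simpa [hc] using hl
  have hctop : c ≠ ⊤ := ENNReal.coe_ne_top
  set q : ℝ≥0∞ := c / K with hq
  have hq0 : q ≠ 0 := by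
    simp [hq, ENNReal.div_eq_zero_iff, hc0, hKtop]
  have hqtop : q ≠ ⊤ := by
    simp [hq, ENNReal.div_eq_top, hc0, hctop, hK0]
  -- key pointwise bound for n ≥ 1
  have hbound : ∀ n : ℕ, 1 ≤ n →
      (‖a l‖₊ : ℝ≥0∞) * q ^ (1 / (n : ℝ)) ≤ (‖y n‖₊ : ℝ≥0∞) ^ (1 / (n : ℝ)) := by
    intro n hn
    have h1 : (‖a l‖₊ : ℝ≥0∞) ^ n * q ≤ (‖y n‖₊ : ℝ≥0∞) := by
      rw [hq, ← mul_div_assoc]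
      · rw [ENNReal.div_le_iff hK0 hKtop]
        calc (‖a l‖₊ : ℝ≥0∞) ^ n * c ≤ (‖g‖₊ : ℝ≥0∞) * ‖y n‖₊ := by
              rw [hc, ← ENNReal.coe_pow, ← ENNReal.coe_mul, ← ENNReal.coe_mul]
              exact_mod_cast hg n
          _ ≤ K * ‖y n‖₊ := by
              gcongr
              exact le_self_add
          _ = ‖y n‖₊ * K := mul_comm _ _
    have hpos : (0:ℝ) < 1 / (n : ℝ) := by positivity
    have := ENNReal.rpow_le_rpow h1 hpos.le
    calc (‖a l‖₊ : ℝ≥0∞) * q ^ (1 / (n : ℝ))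
        = ((‖a l‖₊ : ℝ≥0∞) ^ n * q) ^ (1 / (n : ℝ)) := by
          rw [ENNReal.mul_rpow_of_ne_top (by simp) hqtop, ← ENNReal.rpow_natCast _ n,
            ← ENNReal.rpow_mul]
          congr 1
          rw [mul_one_div, div_self (by exact_mod_cast Nat.one_le_iff_ne_zero.mp hn),
            ENNReal.rpow_one]
      _ ≤ (‖y n‖₊ : ℝ≥0∞) ^ (1 / (n : ℝ)) := this
  -- tendsto of the correction factor
  have htend : Tendsto (fun n : ℕ => (‖a l‖₊ : ℝ≥0∞) * q ^ (1 / (n : ℝ))) atTop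
      (𝓝 ((‖a l‖₊ : ℝ≥0∞))) := by
    have hq' := aux_tendsto_rpow_one_div hq0 hqtop
    have := ENNReal.Tendsto.const_mul (a := (‖a l‖₊ : ℝ≥0∞)) hq' (Or.inr ENNReal.coe_ne_top)
    simpa using this
  calc (‖a l‖₊ : ℝ≥0∞) = liminf (fun n : ℕ => (‖a l‖₊ : ℝ≥0∞) * q ^ (1 / (n : ℝ))) atTop :=
        (htend.liminf_eq).symm
    _ ≤ liminf (fun n : ℕ => (‖y n‖₊ : ℝ≥0∞) ^ (1 / (n : ℝ))) atTop := by
        refine liminf_le_liminf (eventually_atTop.2 ⟨1, hbound⟩) ?_ ?_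
        · isBoundedDefault
        · isBoundedDefault
end
end

section
/- Suppose the basic assumption and (A2) hold. Then for every x ∈ D(T^∞), one has limsup_{n→∞} ‖T^n x‖^{1/n} ≤ sup{|a(λ)| : λ ∈ supp F x}, in the extended nonnegative reals [0,∞]. -/
/-!
Since `F` diagonalises `T_e ⊇ T`, we get `F (Tⁿ x) λ = a(λ)ⁿ (F x)(λ)`, so every term of the
(A2)-expansion of `Tⁿ x` is bounded by `Mⁿ ‖G_λ ((F x)(λ))‖`, where `M` is the supremum of `|a|` on
`supp F x`. Hence `‖Tⁿ x‖ ≤ C Mⁿ` with `C = Σ_λ ‖G_λ ((F x)(λ))‖ < ∞`, and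
`limsup C^{1/n} ≤ 1` because `C` is finite.
-/

open Filter
open scoped ENNReal Topology

noncomputable section

variable {X : Type*} [NormedAddCommGroup X] [NormedSpace ℂ X]

namespace ENNReal

theorem limsup_rpow_one_div_le_one {c : ℝ≥0∞} (hc : c ≠ ∞) :
    limsup (fun n : ℕ => c ^ (1 / (n : ℝ))) atTop ≤ 1 :=
  le_of_forall_gt_imp_ge_of_dense fun _ hb =>
    limsup_le_of_le (by isBoundedDefault) (eventually_pow_one_div_le hc hb)

theorem limsup_rpow_one_div_le_of_le_mul_pow {u : ℕ → ℝ≥0∞} {C M : ℝ≥0∞} (hC : C ≠ ∞)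
    (hu : ∀ n, u n ≤ C * M ^ n) :
    limsup (fun n : ℕ => u n ^ (1 / (n : ℝ))) atTop ≤ M := by
  rcases eq_or_ne M ∞ with rfl | hM
  · exact le_top
  have hroot : ∀ᶠ n : ℕ in atTop, u n ^ (1 / (n : ℝ)) ≤ C ^ (1 / (n : ℝ)) * M := by
    filter_upwards [eventually_ne_atTop 0] with n hn
    calc u n ^ (1 / (n : ℝ)) ≤ (C * M ^ n) ^ (1 / (n : ℝ)) := by gcongr; exact hu n
      _ = C ^ (1 / (n : ℝ)) * M := by
        rw [mul_rpow_of_nonneg _ _ (by positivity), one_div, pow_rpow_inv_natCast hn]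
  calc limsup (fun n : ℕ => u n ^ (1 / (n : ℝ))) atTop
      ≤ limsup (fun n : ℕ => C ^ (1 / (n : ℝ)) * M) atTop := limsup_le_limsup hroot
    _ = M * limsup (fun n : ℕ => C ^ (1 / (n : ℝ))) atTop := limsup_mul_const_of_ne_top hM
    _ ≤ M := mul_le_of_le_one_right' (limsup_rpow_one_div_le_one hC)

end ENNReal

theorem enorm_le_tsum_enorm_mul_iSup_pow {𝕜 E ι : Type*} [NormedField 𝕜]
    [NormedAddCommGroup E] [NormedSpace 𝕜 E] {V : ι → Type*} [∀ i, AddCommGroup (V i)]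
    [∀ i, Module 𝕜 (V i)] (G : ∀ i, V i →ₗ[𝕜] E) (a : ι → 𝕜) (v w : ∀ i, V i) (n : ℕ)
    (hw : ∀ i, w i = a i ^ n • v i) {z : E} (hz : HasSum (fun i => G i (w i)) z) :
    ‖z‖ₑ ≤ (∑' i, ‖G i (v i)‖ₑ) * (⨆ i, ⨆ _ : v i ≠ 0, ‖a i‖ₑ) ^ n := by
  have hterm : ∀ i, ‖G i (w i)‖ₑ ≤ ‖G i (v i)‖ₑ * (⨆ i, ⨆ _ : v i ≠ 0, ‖a i‖ₑ) ^ n := by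
    intro i
    rw [hw, map_smul, enorm_smul, enorm_pow, mul_comm]
    rcases eq_or_ne (v i) 0 with hv | hv
    · simp [hv]
    · gcongr
      exact le_iSup₂ (f := fun i (_ : v i ≠ 0) => ‖a i‖ₑ) i hv
  calc ‖z‖ₑ = ‖∑' i, G i (w i)‖ₑ := by rw [hz.tsum_eq]
    _ ≤ ∑' i, ‖G i (w i)‖ₑ := enorm_tsum_le_tsum_enorm
    _ ≤ ∑' i, ‖G i (v i)‖ₑ * (⨆ i, ⨆ _ : v i ≠ 0, ‖a i‖ₑ) ^ n := ENNReal.tsum_le_tsum hterm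
    _ = (∑' i, ‖G i (v i)‖ₑ) * (⨆ i, ⨆ _ : v i ≠ 0, ‖a i‖ₑ) ^ n := ENNReal.tsum_mul_right

namespace IsIterSeq

variable {T : X →ₗ.[ℂ] X} {x : X} {y : ℕ → X}

theorem mem_domain (hy : IsIterSeq T x y) (n : ℕ) : y n ∈ T.domain :=
  (hy.2 n).1

theorem apply_eq_pow_smul (hy : IsIterSeq T x y) {Te : X →ₗ.[ℂ] X} (hTTe : T ≤ Te)
    {Λ : Type*} {L : Λ → Type*} [∀ l, AddCommGroup (L l)] [∀ l, Module ℂ (L l)]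
    {F : X →ₗ[ℂ] ∀ l, L l} {a : Λ → ℂ}
    (hdiag : ∀ (x : Te.domain) (l : Λ), F (Te x) l = a l • F (x : X) l) (n : ℕ) (l : Λ) :
    F (y n) l = a l ^ n • F x l := by
  induction n with
  | zero => simp [hy.1]
  | succ n ih =>
    obtain ⟨hn, hTy⟩ := hy.2 n
    rw [← hTy, hTTe.2 (x := ⟨y n, hn⟩) (y := ⟨y n, hTTe.1 hn⟩) rfl, hdiag, ih, smul_smul,
      pow_succ']

end IsIterSeq

theorem stmt3_general {Λ : Type*} {L : Λ → Type*}
    [∀ l, NormedAddCommGroup (L l)] [∀ l, NormedSpace ℂ (L l)]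
    (T Te : X →ₗ.[ℂ] X) (hTTe : T ≤ Te)
    (F : X →ₗ[ℂ] ∀ l, L l)
    (a : Λ → ℂ)
    (hdiag : ∀ (x : Te.domain) (l : Λ), F (Te x) l = a l • F (x : X) l)
    (G : ∀ l : Λ, L l →ₗ[ℂ] X)
    (hA2 : ∀ x : T.domain, Summable (fun l : Λ => ‖G l (F (x : X) l)‖) ∧
      HasSum (fun l : Λ => G l (F (x : X) l)) (x : X))
    (x : X) (y : ℕ → X) (hy : IsIterSeq T x y) :
    Filter.limsup (fun n : ℕ => (‖y n‖₊ : ℝ≥0∞) ^ (1 / (n : ℝ))) atTop ≤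
      ⨆ l : Λ, ⨆ _ : F x l ≠ 0, (‖a l‖₊ : ℝ≥0∞) := by
  have hx : x ∈ T.domain := hy.1 ▸ hy.mem_domain 0
  have hC : ∑' l, ‖G l (F x l)‖ₑ ≠ ∞ :=
    tsum_enorm_ne_top_iff_summable_norm.2 (hA2 ⟨x, hx⟩).1
  refine ENNReal.limsup_rpow_one_div_le_of_le_mul_pow hC fun n => ?_
  exact enorm_le_tsum_enorm_mul_iSup_pow G a (F x) (F (y n)) n
    (hy.apply_eq_pow_smul hTTe hdiag n) (hA2 ⟨y n, hy.mem_domain n⟩).2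

/-- Suppose the basic assumption (`F` linear, injective on the domain of `T_e`, diagonalising
`T_e` with eigenvalue function `a`) holds and (A2) holds: there is a family of linear maps
`G λ : L λ → X` with values in the domain `D` of `T`, such that for every `x ∈ D` the family
`(G λ (F x λ))` is absolutely summable in `X` with sum `x`. Then for every `x ∈ D(T^∞)`
(with orbit `y n = T^n x`),
`limsup ‖T^n x‖^{1/n} ≤ sup {|a λ| : λ ∈ supp F x}` in `[0,∞]`. -/
theorem stmt3 [CompleteSpace X] {Λ : Type*} [Nonempty Λ] {L : Λ → Type*}
    [∀ l, NormedAddCommGroup (L l)] [∀ l, NormedSpace ℂ (L l)]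
    (T Te : X →ₗ.[ℂ] X) (hTTe : T ≤ Te)
    (F : X →ₗ[ℂ] ∀ l, L l) (hinj : Set.InjOn F (Te.domain : Set X))
    (a : Λ → ℂ)
    (hdiag : ∀ (x : Te.domain) (l : Λ), F (Te x) l = a l • F (x : X) l)
    (G : ∀ l : Λ, L l →ₗ[ℂ] X) (hGD : ∀ (l : Λ) (v : L l), G l v ∈ T.domain)
    (hA2 : ∀ x : T.domain, Summable (fun l : Λ => ‖G l (F (x : X) l)‖) ∧
      HasSum (fun l : Λ => G l (F (x : X) l)) (x : X))
    (x : X) (y : ℕ → X) (hy : IsIterSeq T x y) :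
    Filter.limsup (fun n : ℕ => (‖y n‖₊ : ℝ≥0∞) ^ (1 / (n : ℝ))) atTop ≤
      ⨆ l : Λ, ⨆ _ : F x l ≠ 0, (‖a l‖₊ : ℝ≥0∞) :=
  stmt3_general T Te hTTe F a hdiag G hA2 x y hy
end
end

section
/- For 1 ≤ p ≤ ∞ and every f ∈ C^∞(𝕋), the limit lim_{n→∞} ‖d^n f/dt^n‖_p^{1/n} exists and equals sup{|k| : k ∈ ℤ, F f(k) ≠ 0}, in the extended nonnegative reals [0,∞]. -/
open Filter MeasureTheory
open scoped ENNReal Topology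

noncomputable section

/-- The Haar probability measure of the 1-torus `𝕋 = ℝ/2πℤ`, realised on `ℝ` as
`(1/(2π)) · (Lebesgue restricted to (0, 2π])`. -/
def torusMeasure : Measure ℝ :=
  (ENNReal.ofReal (2 * Real.pi))⁻¹ • (volume.restrict (Set.Ioc 0 (2 * Real.pi)))

/-- `f : ℝ → ℂ` represents an element of `C^∞(𝕋)`: it is infinitely differentiable and
`2π`-periodic. -/
def SmoothTorusFn (f : ℝ → ℂ) : Prop :=
  (∀ n : ℕ, ContDiff ℝ n f) ∧ Function.Periodic f (2 * Real.pi)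

/-- The `k`-th Fourier coefficient `F f (k) = (1/2π) ∫₀^{2π} f(t) e^{-ikt} dt`. -/
def torusFourier (f : ℝ → ℂ) (k : ℤ) : ℂ :=
  ∫ t, f t * Complex.exp (-(Complex.I * k * t)) ∂torusMeasure

/-!
Integration by parts gives `F (f⁽ⁿ⁾) k = (i k)ⁿ F f k`, and `|F g k| ≤ ‖g‖₁ ≤ ‖g‖_p` on the
probability space `𝕋`. Hence `|k| · |F f k|^{1/n} ≤ ‖f⁽ⁿ⁾‖_p^{1/n}` for every `k` in the
spectrum of `f`, which bounds the `liminf` from below by `S = sup {|k| : F f k ≠ 0}`. If `S < ∞`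
the spectrum is finite, so `f⁽ⁿ⁾(t) = ∑ₖ (i k)ⁿ F f k e^{ikt}` is a trigonometric polynomial with
`‖f⁽ⁿ⁾‖_∞ ≤ (∑ₖ |F f k|) Sⁿ`, which bounds the `limsup` from above by `S`.
-/

open Complex

instance : IsProbabilityMeasure torusMeasure := by
  constructor
  rw [torusMeasure, Measure.smul_apply, Measure.restrict_apply_univ, Real.volume_Ioc, sub_zero,
    smul_eq_mul]
  exact ENNReal.inv_mul_cancel (by simp [Real.pi_pos]) ENNReal.ofReal_ne_top

instance : Fact (0 < 2 * Real.pi) := ⟨Real.two_pi_pos⟩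

namespace ENNReal

theorem tendsto_rpow_one_div_natCast {c : ℝ≥0∞} (hc0 : c ≠ 0) (hct : c ≠ ⊤) :
    Tendsto (fun n : ℕ => c ^ (1 / (n : ℝ))) atTop (𝓝 1) := by
  lift c to NNReal using hct
  have hc0' : c ≠ 0 := by exact_mod_cast hc0
  have h := (tendsto_const_nhds (x := c)).nnrpow
    (tendsto_one_div_atTop_nhds_zero_nat (𝕜 := ℝ)) (Or.inl hc0')
  rw [NNReal.rpow_zero] at h
  simpa [← ENNReal.coe_rpow_of_ne_zero hc0'] using ENNReal.tendsto_coe.2 h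

theorem tendsto_mul_pow_rpow_one_div {c : ℝ≥0∞} (hc0 : c ≠ 0) (hct : c ≠ ⊤) (a : ℝ≥0∞) :
    Tendsto (fun n : ℕ => (c * a ^ n) ^ (1 / (n : ℝ))) atTop (𝓝 a) := by
  have h := ENNReal.Tendsto.mul_const (tendsto_rpow_one_div_natCast hc0 hct) (b := a)
    (Or.inl one_ne_zero)
  rw [one_mul] at h
  refine h.congr' ?_
  filter_upwards [eventually_ne_atTop 0] with n hn
  rw [ENNReal.mul_rpow_of_nonneg _ _ (by positivity), ← ENNReal.rpow_natCast,
    ← ENNReal.rpow_mul, mul_one_div_cancel (by exact_mod_cast hn), ENNReal.rpow_one]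

theorem le_liminf_rpow_one_div {x : ℕ → ℝ≥0∞} {c a : ℝ≥0∞} (hc0 : c ≠ 0) (hct : c ≠ ⊤)
    (h : ∀ n, c * a ^ n ≤ x n) : a ≤ atTop.liminf fun n : ℕ => x n ^ (1 / (n : ℝ)) := by
  rw [← (tendsto_mul_pow_rpow_one_div hc0 hct a).liminf_eq]
  exact liminf_le_liminf (.of_forall fun n => rpow_le_rpow (h n) (by positivity))

theorem limsup_rpow_one_div_le {x : ℕ → ℝ≥0∞} {C a : ℝ≥0∞} (hCt : C ≠ ⊤)
    (h : ∀ n, x n ≤ C * a ^ n) : (atTop.limsup fun n : ℕ => x n ^ (1 / (n : ℝ))) ≤ a := by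
  have hC1 : C + 1 ≠ ⊤ := add_ne_top.2 ⟨hCt, one_ne_top⟩
  rw [← (tendsto_mul_pow_rpow_one_div (by simp) hC1 a).limsup_eq]
  refine limsup_le_limsup (.of_forall fun n => rpow_le_rpow ?_ (by positivity))
  exact (h n).trans (by gcongr; exact le_self_add)

end ENNReal

theorem Function.Periodic.iteratedDeriv {𝕜 F : Type*} [NontriviallyNormedField 𝕜]
    [NormedAddCommGroup F] [NormedSpace 𝕜 F] {g : 𝕜 → F} {c : 𝕜} (hg : Function.Periodic g c)
    (n : ℕ) : Function.Periodic (iteratedDeriv n g) c := fun x => by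
  have h := congrFun (iteratedDeriv_comp_add_const n g c) x
  rwa [show (fun z => g (z + c)) = g from funext hg, eq_comm] at h

def Function.Periodic.liftContinuousMap {T : ℝ} {E : Type*} [TopologicalSpace E] {g : ℝ → E}
    (hper : Function.Periodic g T) (hg : Continuous g) : C(AddCircle T, E) :=
  ⟨hper.lift, (QuotientAddGroup.isQuotientMap_mk _).continuous_iff.2 hg⟩

theorem Function.Periodic.liftContinuousMap_coe {T : ℝ} {E : Type*} [TopologicalSpace E]
    {g : ℝ → E} (hper : Function.Periodic g T) (hg : Continuous g) (x : ℝ) :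
    hper.liftContinuousMap hg x = g x :=
  hper.lift_coe x

theorem AddCircle.eq_sum_fourier_of_fourierCoeff_eq_zero {T : ℝ} [Fact (0 < T)]
    (f : C(AddCircle T, ℂ)) {s : Finset ℤ} (hs : ∀ k ∉ s, fourierCoeff f k = 0)
    (x : AddCircle T) : f x = ∑ k ∈ s, fourierCoeff f k • fourier k x :=
  (has_pointwise_sum_fourier_series_of_summable (summable_of_ne_finset_zero hs) x).unique
    (hasSum_sum_of_ne_finset_zero fun k hk => by rw [hs k hk, zero_smul])

theorem torusFourier_eq_intervalIntegral (g : ℝ → ℂ) (k : ℤ) :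
    torusFourier g k
      = (2 * Real.pi)⁻¹ • ∫ t in (0)..(2 * Real.pi), g t * exp (-(I * k * t)) := by
  rw [torusFourier, torusMeasure, integral_smul_measure,
    intervalIntegral.integral_of_le Real.two_pi_pos.le, ENNReal.toReal_inv,
    ENNReal.toReal_ofReal Real.two_pi_pos.le]

theorem fourierCoeff_liftContinuousMap {g : ℝ → ℂ} (hper : Function.Periodic g (2 * Real.pi))
    (hg : Continuous g) (k : ℤ) :
    fourierCoeff (hper.liftContinuousMap hg) k = torusFourier g k := by
  rw [fourierCoeff_eq_intervalIntegral _ k 0, torusFourier_eq_intervalIntegral, zero_add,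
    one_div]
  congr 1
  refine intervalIntegral.integral_congr fun t _ => ?_
  simp only [Function.Periodic.liftContinuousMap, ContinuousMap.coe_mk, hper.lift_coe,
    fourier_coe_apply, smul_eq_mul, mul_comm (g t)]
  congr 2
  field_simp
  push_cast
  ring

theorem enorm_le_sum_enorm_torusFourier {g : ℝ → ℂ} (hper : Function.Periodic g (2 * Real.pi))
    (hg : Continuous g) {s : Finset ℤ} (hs : ∀ k ∉ s, torusFourier g k = 0) (t : ℝ) :
    ‖g t‖ₑ ≤ ∑ k ∈ s, ‖torusFourier g k‖ₑ := by
  have hsum := AddCircle.eq_sum_fourier_of_fourierCoeff_eq_zero (hper.liftContinuousMap hg)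
    (s := s) (by simpa only [fourierCoeff_liftContinuousMap] using hs) t
  simp only [fourierCoeff_liftContinuousMap] at hsum
  rw [← hper.liftContinuousMap_coe hg, hsum]
  refine (enorm_sum_le _ _).trans (Finset.sum_le_sum fun k _ => ?_)
  rw [enorm_smul, ← ofReal_norm (fourier k _), fourier_apply, Circle.norm_coe, ENNReal.ofReal_one,
    mul_one]

theorem hasDerivAt_exp_neg_I_mul (k : ℤ) (t : ℝ) :
    HasDerivAt (fun s : ℝ => exp (-(I * k * s))) (-(I * k) * exp (-(I * k * t))) t := by
  have h := (((hasDerivAt_id (t : ℂ)).const_mul (I * k)).neg.cexp).comp_ofReal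
  simpa [mul_comm] using h

theorem torusFourier_deriv {g : ℝ → ℂ} (hper : Function.Periodic g (2 * Real.pi))
    (hg : Differentiable ℝ g) (hg' : Continuous (deriv g)) (k : ℤ) :
    torusFourier (deriv g) k = I * k * torusFourier g k := by
  have hcont : Continuous fun t : ℝ => exp (-(I * k * t)) := by fun_prop
  have hparts := intervalIntegral.integral_deriv_mul_eq_sub (a := 0) (b := 2 * Real.pi)
    (fun t _ => (hg t).hasDerivAt) (fun t _ => hasDerivAt_exp_neg_I_mul k t)
    (hg'.intervalIntegrable _ _) ((continuous_const.mul hcont).intervalIntegrable _ _)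
  have hexp : exp (-(I * k * ((2 * Real.pi : ℝ) : ℂ))) = 1 := by
    rw [show -(I * k * ((2 * Real.pi : ℝ) : ℂ)) = (-k : ℤ) * (2 * Real.pi * I) by push_cast; ring,
      exp_int_mul_two_pi_mul_I]
  rw [hexp, show g (2 * Real.pi) = g 0 by simpa using hper 0] at hparts
  simp only [ofReal_zero, mul_zero, neg_zero, exp_zero, sub_self] at hparts
  have hint₁ : IntervalIntegrable (fun t => deriv g t * exp (-(I * k * t))) volume 0
      (2 * Real.pi) := (hg'.mul hcont).intervalIntegrable _ _
  have hint₂ : IntervalIntegrable (fun t => g t * (-(I * k) * exp (-(I * k * t)))) volume 0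
      (2 * Real.pi) := (hg.continuous.mul (continuous_const.mul hcont)).intervalIntegrable _ _
  rw [intervalIntegral.integral_add hint₁ hint₂] at hparts
  simp only [mul_left_comm (g _) (-(I * k)), intervalIntegral.integral_const_mul] at hparts
  rw [torusFourier_eq_intervalIntegral, torusFourier_eq_intervalIntegral,
    eq_neg_of_add_eq_zero_left hparts, neg_mul, neg_neg, mul_smul_comm]

theorem enorm_torusFourier_le_eLpNorm {g : ℝ → ℂ} (hg : AEStronglyMeasurable g torusMeasure)
    (k : ℤ) {p : ℝ≥0∞} (hp : 1 ≤ p) : ‖torusFourier g k‖ₑ ≤ eLpNorm g p torusMeasure := by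
  have hexp (t : ℝ) : ‖exp (-(I * k * t))‖ₑ = 1 := by
    rw [← ofReal_norm, norm_exp]
    simp
  calc ‖torusFourier g k‖ₑ ≤ ∫⁻ t, ‖g t * exp (-(I * k * t))‖ₑ ∂torusMeasure :=
        enorm_integral_le_lintegral_enorm _
    _ = eLpNorm g 1 torusMeasure := by
        simp only [enorm_mul, hexp, mul_one, eLpNorm_one_eq_lintegral_enorm]
    _ ≤ eLpNorm g p torusMeasure := eLpNorm_le_eLpNorm_of_exponent_le hp hg

namespace SmoothTorusFn

theorem continuous_iteratedDeriv {f : ℝ → ℂ} (hf : SmoothTorusFn f) (n : ℕ) :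
    Continuous (iteratedDeriv n f) :=
  (hf.1 n).continuous_iteratedDeriv' n

theorem torusFourier_iteratedDeriv {f : ℝ → ℂ} (hf : SmoothTorusFn f) (n : ℕ) (k : ℤ) :
    torusFourier (iteratedDeriv n f) k = (I * k) ^ n * torusFourier f k := by
  induction n with
  | zero => simp
  | succ n ih =>
    have hdiff := (hf.1 (n + 1)).differentiable_iteratedDeriv n (by exact_mod_cast n.lt_succ_self)
    have hcont := hf.continuous_iteratedDeriv (n + 1)
    rw [iteratedDeriv_succ] at hcont ⊢
    rw [torusFourier_deriv (hf.2.iteratedDeriv n) hdiff hcont, ih]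
    ring

theorem enorm_torusFourier_iteratedDeriv {f : ℝ → ℂ} (hf : SmoothTorusFn f) (n : ℕ) (k : ℤ) :
    ‖torusFourier (iteratedDeriv n f) k‖ₑ = ‖torusFourier f k‖ₑ * (‖k‖₊ : ℝ≥0∞) ^ n := by
  rw [hf.torusFourier_iteratedDeriv, mul_comm, enorm_mul, enorm_pow, enorm_mul, ← enorm_norm I,
    norm_I, enorm_one, one_mul, enorm_eq_nnnorm (k : ℂ), nnnorm_intCast]

theorem enorm_torusFourier_mul_pow_le_eLpNorm {f : ℝ → ℂ} (hf : SmoothTorusFn f) {p : ℝ≥0∞}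
    (hp : 1 ≤ p) (n : ℕ) (k : ℤ) :
    ‖torusFourier f k‖ₑ * (‖k‖₊ : ℝ≥0∞) ^ n ≤ eLpNorm (iteratedDeriv n f) p torusMeasure := by
  rw [← hf.enorm_torusFourier_iteratedDeriv]
  exact enorm_torusFourier_le_eLpNorm (hf.continuous_iteratedDeriv n).aestronglyMeasurable k hp

theorem eLpNorm_iteratedDeriv_le {f : ℝ → ℂ} (hf : SmoothTorusFn f) {s : Finset ℤ}
    (hs : ∀ k ∉ s, torusFourier f k = 0) {a : ℝ≥0∞} (ha : ∀ k ∈ s, (‖k‖₊ : ℝ≥0∞) ≤ a)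
    (p : ℝ≥0∞) (n : ℕ) :
    eLpNorm (iteratedDeriv n f) p torusMeasure ≤ (∑ k ∈ s, ‖torusFourier f k‖ₑ) * a ^ n := by
  have hs' (k : ℤ) (hk : k ∉ s) : torusFourier (iteratedDeriv n f) k = 0 := by
    rw [hf.torusFourier_iteratedDeriv, hs k hk, mul_zero]
  have hbound (t : ℝ) : ‖iteratedDeriv n f t‖ₑ ≤ (∑ k ∈ s, ‖torusFourier f k‖ₑ) * a ^ n :=
    calc ‖iteratedDeriv n f t‖ₑ ≤ ∑ k ∈ s, ‖torusFourier (iteratedDeriv n f) k‖ₑ :=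
          enorm_le_sum_enorm_torusFourier (hf.2.iteratedDeriv n) (hf.continuous_iteratedDeriv n)
            hs' t
      _ ≤ ∑ k ∈ s, ‖torusFourier f k‖ₑ * a ^ n := by
          gcongr with k hk
          rw [hf.enorm_torusFourier_iteratedDeriv]
          gcongr
          exact ha k hk
      _ = (∑ k ∈ s, ‖torusFourier f k‖ₑ) * a ^ n := (Finset.sum_mul ..).symm
  simpa using eLpNorm_le_of_ae_enorm_bound (μ := torusMeasure) (p := p) (ae_of_all _ hbound)

end SmoothTorusFn

theorem Int.finite_support_of_iSup_nnnorm_ne_top {M : Type*} [Zero M] {c : ℤ → M}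
    (h : (⨆ k : ℤ, ⨆ _ : c k ≠ 0, (‖k‖₊ : ℝ≥0∞)) ≠ ⊤) : (Function.support c).Finite := by
  set S := ⨆ k : ℤ, ⨆ _ : c k ≠ 0, (‖k‖₊ : ℝ≥0∞)
  refine (isCompact_closedBall (0 : ℤ) S.toReal).finite_of_discrete.subset fun k hk => ?_
  have hle := ENNReal.toReal_mono h (le_iSup₂ (f := fun k (_ : c k ≠ 0) => (‖k‖₊ : ℝ≥0∞)) k hk)
  simpa using hle

/-- For `1 ≤ p ≤ ∞` and every `f ∈ C^∞(𝕋)`, the limit `lim ‖d^n f/dt^n‖_p^{1/n}` exists and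
equals `sup {|k| : k ∈ ℤ, F f (k) ≠ 0}` in `[0,∞]`. -/
theorem stmt10 (p : ℝ≥0∞) (hp : 1 ≤ p) (f : ℝ → ℂ) (hf : SmoothTorusFn f) :
    Filter.Tendsto
      (fun n : ℕ => (eLpNorm (iteratedDeriv n f) p torusMeasure) ^ (1 / (n : ℝ))) atTop
      (𝓝 (⨆ k : ℤ, ⨆ _ : torusFourier f k ≠ 0, (‖k‖₊ : ℝ≥0∞))) := by
  set S := ⨆ k : ℤ, ⨆ _ : torusFourier f k ≠ 0, (‖k‖₊ : ℝ≥0∞)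
  refine tendsto_of_le_liminf_of_limsup_le ?_ ?_
  · exact iSup₂_le fun k hk => ENNReal.le_liminf_rpow_one_div (enorm_ne_zero.2 hk) enorm_ne_top
      (hf.enorm_torusFourier_mul_pow_le_eLpNorm hp · k)
  · rcases eq_or_ne S ⊤ with hS | hS
    · exact hS ▸ le_top
    have hfin := Int.finite_support_of_iSup_nnnorm_ne_top hS
    refine ENNReal.limsup_rpow_one_div_le (C := ∑ k ∈ hfin.toFinset, ‖torusFourier f k‖ₑ)
      (ENNReal.sum_ne_top.2 fun _ _ => enorm_ne_top) fun n => ?_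
    refine hf.eLpNorm_iteratedDeriv_le (fun k hk => ?_) (fun k hk => ?_) p n
    · simpa using hk
    · exact le_iSup₂ (f := fun k (_ : torusFourier f k ≠ 0) => (‖k‖₊ : ℝ≥0∞)) k (by simpa using hk)
end
end
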